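/- arXiv:2108.03057 — 2 statements merged into one kernel-verified Lean document; each statement's English description precedes it below -/
import Mathlib

section
/- Let X be a real Banach space. Then β_{C(Δ)*}(X*) ≤ α_{(⊕ₙ₌₀^∞ ℓ∞^{2ⁿ})_{ℓ₁}}(X), where X* is the dual space of X and C(Δ)* is the dual of C(Δ). -/
open MeasureTheory NormedSpace
open scoped ENNReal

/-- The Banach–Mazur distance `d(Y,Z)`: the infimum of `‖T‖·‖T⁻¹‖` over all bounded linear
isomorphisms `T : Y → Z` (`∞` if none exists). -/
noncomputable def BMdist (Y Z : Type*) [NormedAddCommGroup Y] [NormedSpace ℝ Y]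
    [NormedAddCommGroup Z] [NormedSpace ℝ Z] : ℝ≥0∞ :=
  ⨅ T : Y ≃L[ℝ] Z, ENNReal.ofReal (‖(T : Y →L[ℝ] Z)‖ * ‖(T.symm : Z →L[ℝ] Y)‖)

/-- `α_Y(X)`: the infimum of `d(Y,Z)` over all closed linear subspaces `Z` of `X`. -/
noncomputable def alphaQ (Y X : Type*) [NormedAddCommGroup Y] [NormedSpace ℝ Y]
    [NormedAddCommGroup X] [NormedSpace ℝ X] : ℝ≥0∞ :=
  ⨅ (Z : Submodule ℝ X) (_ : IsClosed (Z : Set X)), BMdist Y Z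

/-- `β_Y(X)`: the infimum of `‖A‖·‖B‖` over all pairs of bounded linear operators
`A : X → Y`, `B : Y → X` with `A ∘ B = id_Y` (`∞` if none exists). -/
noncomputable def betaQ (Y X : Type*) [NormedAddCommGroup Y] [NormedSpace ℝ Y]
    [NormedAddCommGroup X] [NormedSpace ℝ X] : ℝ≥0∞ :=
  ⨅ p : {p : (X →L[ℝ] Y) × (Y →L[ℝ] X) // p.1.comp p.2 = ContinuousLinearMap.id ℝ Y},
    ENNReal.ofReal (‖p.val.1‖ * ‖p.val.2‖)

/-! Let `T` be an isomorphism of `Y = (⊕ ℓ∞^{2ⁿ})_{ℓ₁}` onto a subspace `Z` of `X`, and read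
`ℓ∞^{2ᴺ}` as the functions on the level-`N` nodes of the dyadic tree, i.e. on the level-`N`
cylinders of `Δ`. Sampling `f ∈ C(Δ)` on level `N` and applying `T` to the `N`-th block gives
`a_N : C(Δ) → X` with `‖a_N‖ ≤ ‖T‖`. Conversely, evaluating `T⁻¹ z` along the branch through a
node of level `M` is a functional of norm `≤ ‖T⁻¹‖` on `Z`; extending these by Hahn–Banach gives
`b_M : X → C(Δ)` with `‖b_M‖ ≤ ‖T⁻¹‖` and `b_M (a_N f) = f ∘ ρ_N` for `N ≤ M`, where `ρ_N` zeroes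
all coordinates from `N` on. As `f ∘ ρ_N → f` uniformly, the weak-star ultralimits `A` of the
`a_N*` and `B` of the `b_M*` along a free ultrafilter satisfy `A ∘ B = id`, `‖A‖ ≤ ‖T‖` and
`‖B‖ ≤ ‖T⁻¹‖`. -/

open Filter Topology

theorem ContinuousLinearMap.norm_proj_le {ι : Type*} [Fintype ι] (i : ι) :
    ‖(ContinuousLinearMap.proj i : (ι → ℝ) →L[ℝ] ℝ)‖ ≤ 1 :=
  opNorm_le_bound _ zero_le_one fun v => by simpa using norm_le_pi_norm v i

theorem exists_extension_pi_norm_le {X D : Type*} [NormedAddCommGroup X] [NormedSpace ℝ X]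
    [Fintype D] (Z : Submodule ℝ X) (g : Z →L[ℝ] (D → ℝ)) :
    ∃ G : X →L[ℝ] (D → ℝ), (∀ z : Z, G z = g z) ∧ ‖G‖ ≤ ‖g‖ := by
  choose G hGg hGn using fun d => exists_extension_norm_eq Z (ContinuousLinearMap.proj d ∘L g)
  refine ⟨ContinuousLinearMap.pi G, fun z => funext fun d => hGg d z, ?_⟩
  refine ContinuousLinearMap.norm_pi_le_of_le (fun d => ?_) (norm_nonneg g)
  rw [hGn d]
  exact (ContinuousLinearMap.opNorm_comp_le _ _).trans
    (mul_le_of_le_one_left (norm_nonneg g) (ContinuousLinearMap.norm_proj_le d))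

theorem betaQ_le_of_comp_eq_id {Y X : Type*} [NormedAddCommGroup Y] [NormedSpace ℝ Y]
    [NormedAddCommGroup X] [NormedSpace ℝ X] {A : X →L[ℝ] Y} {B : Y →L[ℝ] X} {a b : ℝ}
    (hAB : A.comp B = ContinuousLinearMap.id ℝ Y) (hA : ‖A‖ ≤ a) (hB : ‖B‖ ≤ b) :
    betaQ Y X ≤ ENNReal.ofReal (a * b) := by
  unfold betaQ
  refine (iInf_le _ (⟨(A, B), hAB⟩ : {p : (X →L[ℝ] Y) × (Y →L[ℝ] X) // p.1.comp p.2 = _})).trans ?_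
  exact ENNReal.ofReal_le_ofReal (mul_le_mul hA hB (norm_nonneg _) ((norm_nonneg _).trans hA))

section UltraDual

variable {ι : Type*} (U : Ultrafilter ι)

theorem Ultrafilter.tendsto_limUnder_of_abs_le {f : ι → ℝ} {C : ℝ} (h : ∀ i, |f i| ≤ C) :
    Tendsto f U (𝓝 (limUnder (U : Filter ι) f)) := by
  obtain ⟨a, -, ha⟩ := isCompact_Icc.ultrafilter_le_nhds (U.map f)
    (le_principal_iff.2 (eventually_map.2 (Eventually.of_forall fun i => abs_le.1 (h i))))
  exact tendsto_nhds_limUnder ⟨a, ha⟩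

variable {E F : Type*} [NormedAddCommGroup E] [NormedSpace ℝ E]
  [NormedAddCommGroup F] [NormedSpace ℝ F]
  {a : ι → E →L[ℝ] F} {C : ℝ}

theorem abs_apply_apply_le_of_norm_le (ha : ∀ i, ‖a i‖ ≤ C) (φ : StrongDual ℝ F) (e : E) (i : ι) :
    |φ (a i e)| ≤ C * ‖φ‖ * ‖e‖ := by
  rw [mul_comm C, mul_assoc]
  exact (φ.le_opNorm _).trans
    (mul_le_mul_of_nonneg_left ((a i).le_of_opNorm_le (ha i) e) (norm_nonneg φ))

theorem tendsto_limUnder_apply_apply (ha : ∀ i, ‖a i‖ ≤ C) (φ : StrongDual ℝ F) (e : E) :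
    Tendsto (fun i => φ (a i e)) U (𝓝 (limUnder (U : Filter ι) fun i => φ (a i e))) :=
  U.tendsto_limUnder_of_abs_le (abs_apply_apply_le_of_norm_le ha φ e)

/-- The weak-star limit of the adjoints `(a i)*` along `U`. -/
noncomputable def ultralimitDual (a : ι → E →L[ℝ] F) (C : ℝ) (ha : ∀ i, ‖a i‖ ≤ C) :
    StrongDual ℝ F →L[ℝ] StrongDual ℝ E :=
  LinearMap.mkContinuous₂
    (LinearMap.mk₂ ℝ (fun φ e => limUnder (U : Filter ι) fun i => φ (a i e))
      (fun φ ψ e => by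
        simpa using ((tendsto_limUnder_apply_apply U ha φ e).add
          (tendsto_limUnder_apply_apply U ha ψ e)).limUnder_eq)
      (fun c φ e => by
        simpa using ((tendsto_limUnder_apply_apply U ha φ e).const_mul c).limUnder_eq)
      (fun φ e e' => by
        simpa using ((tendsto_limUnder_apply_apply U ha φ e).add
          (tendsto_limUnder_apply_apply U ha φ e')).limUnder_eq)
      (fun c φ e => by
        simpa using ((tendsto_limUnder_apply_apply U ha φ e).const_mul c).limUnder_eq))
    C fun φ e => by
      simpa using isClosed_Iic.mem_of_tendsto (tendsto_limUnder_apply_apply U ha φ e).abs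
        (Eventually.of_forall (abs_apply_apply_le_of_norm_le ha φ e))

theorem ultralimitDual_apply_apply (ha : ∀ i, ‖a i‖ ≤ C) (φ : StrongDual ℝ F) (e : E) :
    ultralimitDual U a C ha φ e = limUnder (U : Filter ι) fun i => φ (a i e) :=
  rfl

theorem norm_ultralimitDual_le (ha : ∀ i, ‖a i‖ ≤ C) : ‖ultralimitDual U a C ha‖ ≤ C := by
  obtain ⟨i, -⟩ := U.neBot.nonempty_of_mem univ_mem
  exact LinearMap.mkContinuous₂_norm_le _ ((norm_nonneg _).trans (ha i)) _

theorem ultralimitDual_comp_eq_id {b : ι → F →L[ℝ] E} {D : ℝ} (ha : ∀ i, ‖a i‖ ≤ C)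
    (hb : ∀ j, ‖b j‖ ≤ D) (c : ι → E → E) (hbc : ∀ i e, ∀ᶠ j in (U : Filter ι), b j (a i e) = c i e)
    (hc : ∀ e, Tendsto (fun i => c i e) U (𝓝 e)) :
    (ultralimitDual U a C ha).comp (ultralimitDual U b D hb) = ContinuousLinearMap.id ℝ _ := by
  ext μ e
  have inner : ∀ i, ultralimitDual U b D hb μ (a i e) = μ (c i e) := fun i =>
    (tendsto_const_nhds.congr' ((hbc i e).mono fun j hj => by rw [hj])).limUnder_eq
  simp only [ContinuousLinearMap.comp_apply, ultralimitDual_apply_apply, inner,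
    ContinuousLinearMap.id_apply]
  exact ((μ.continuous.tendsto e).comp (hc e)).limUnder_eq

end UltraDual

section Sampling

variable {K D : Type*} [TopologicalSpace K]

noncomputable def ContinuousMap.sampleCLM (g : D → K) : C(K, ℝ) →L[ℝ] (D → ℝ) :=
  ContinuousLinearMap.pi fun d => ContinuousMap.evalCLM ℝ (g d)

theorem ContinuousMap.sampleCLM_apply (g : D → K) (f : C(K, ℝ)) (d : D) :
    sampleCLM g f d = f (g d) :=
  rfl

variable [Fintype D] [CompactSpace K]

theorem ContinuousMap.norm_sampleCLM_le (g : D → K) : ‖sampleCLM g‖ ≤ 1 :=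
  ContinuousLinearMap.opNorm_le_bound _ zero_le_one fun f => by
    rw [one_mul]
    exact (pi_norm_le_iff_of_nonneg (norm_nonneg f)).2 fun d => f.norm_coe_le_norm (g d)

variable [TopologicalSpace D] [DiscreteTopology D]

noncomputable def ContinuousMap.pullbackCLM (g : K → D) (hg : Continuous g) :
    (D → ℝ) →L[ℝ] C(K, ℝ) :=
  LinearMap.mkContinuous
    { toFun := fun v => ⟨v ∘ g, continuous_of_discreteTopology.comp hg⟩
      map_add' := fun _ _ => rfl
      map_smul' := fun _ _ => rfl }
    1 fun v => by
      simpa using (ContinuousMap.norm_le _ (norm_nonneg v)).2 fun k => norm_le_pi_norm v (g k)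

theorem ContinuousMap.pullbackCLM_apply (g : K → D) (hg : Continuous g) (v : D → ℝ) (k : K) :
    pullbackCLM g hg v k = v (g k) :=
  rfl

theorem ContinuousMap.norm_pullbackCLM_le (g : K → D) (hg : Continuous g) :
    ‖pullbackCLM g hg‖ ≤ 1 :=
  LinearMap.mkContinuous_norm_le _ zero_le_one _

end Sampling

section Cantor

def dyadicEquiv (N : ℕ) : (Fin N → Bool) ≃ Fin (2 ^ N) :=
  (Equiv.piCongrRight fun _ => finTwoEquiv.symm).trans finFunctionFinEquiv

def cantorTrunc (N : ℕ) (t : ℕ → Bool) : ℕ → Bool := fun i => if i < N then t i else false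

def cantorCode (N : ℕ) (t : ℕ → Bool) : Fin (2 ^ N) := dyadicEquiv N fun i => t i

def cantorPoint (N : ℕ) (s : Fin (2 ^ N)) : ℕ → Bool :=
  fun i => if h : i < N then (dyadicEquiv N).symm s ⟨i, h⟩ else false

theorem cantorPoint_cantorCode (N : ℕ) (t : ℕ → Bool) :
    cantorPoint N (cantorCode N t) = cantorTrunc N t := by
  funext i
  by_cases h : i < N <;> simp [cantorPoint, cantorCode, cantorTrunc, h]

theorem cantorTrunc_cantorTrunc {N M : ℕ} (h : N ≤ M) (t : ℕ → Bool) :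
    cantorTrunc N (cantorTrunc M t) = cantorTrunc N t := by
  funext i
  simp only [cantorTrunc]
  split_ifs <;> first | rfl | omega

theorem continuous_cantorCode (N : ℕ) : Continuous (cantorCode N) :=
  continuous_of_discreteTopology.comp (continuous_pi fun i => continuous_apply (i : ℕ))

theorem tendstoUniformly_cantorTrunc : TendstoUniformly cantorTrunc id atTop := by
  rw [tendstoUniformly_iff_tendsto, Pi.uniformity, tendsto_iInf]
  intro i
  rw [tendsto_comap_iff]
  refine (tendsto_principal.2 ?_).mono_right refl_le_uniformity
  filter_upwards [(eventually_gt_atTop i).prod_inl ⊤] with q hq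
  simp [cantorTrunc, hq]

theorem pullbackCLM_sampleCLM_apply (N : ℕ) (f : C(ℕ → Bool, ℝ)) (t : ℕ → Bool) :
    ContinuousMap.pullbackCLM (cantorCode N) (continuous_cantorCode N)
      (ContinuousMap.sampleCLM (cantorPoint N) f) t = f (cantorTrunc N t) := by
  rw [ContinuousMap.pullbackCLM_apply, ContinuousMap.sampleCLM_apply, cantorPoint_cantorCode]

theorem tendsto_pullbackCLM_sampleCLM (f : C(ℕ → Bool, ℝ)) :
    Tendsto (fun N => ContinuousMap.pullbackCLM (cantorCode N) (continuous_cantorCode N)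
      (ContinuousMap.sampleCLM (cantorPoint N) f)) atTop (𝓝 f) := by
  rw [ContinuousMap.tendsto_iff_tendstoUniformly]
  simp only [pullbackCLM_sampleCLM_apply]
  exact (CompactSpace.uniformContinuous_of_continuous f.continuous).comp_tendstoUniformly
    tendstoUniformly_cantorTrunc

end Cantor

local notation "𝓨" => lp (fun n : ℕ => Fin (2 ^ n) → ℝ) 1

noncomputable def branchEval (w : ∀ n, Fin (2 ^ n)) : StrongDual ℝ 𝓨 :=
  lp.tsumCLM ℝ ℕ ℝ ∘L lp.mapCLM 1 (fun n => ContinuousLinearMap.proj (w n)) zero_le_one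
    fun n => ContinuousLinearMap.norm_proj_le (w n)

theorem norm_branchEval_le (w : ∀ n, Fin (2 ^ n)) : ‖branchEval w‖ ≤ 1 :=
  (ContinuousLinearMap.opNorm_comp_le _ _).trans <| by
    simpa using mul_le_mul lp.norm_tsumCLM_le (lp.norm_mapCLM_le _ _ _ _) (norm_nonneg _)
      zero_le_one

theorem branchEval_single (w : ∀ n, Fin (2 ^ n)) (N : ℕ) (v : Fin (2 ^ N) → ℝ) :
    branchEval w (lp.single 1 N v) = v (w N) := by
  simp only [branchEval, ContinuousLinearMap.comp_apply, lp.tsumCLM_apply, lp.mapCLM_apply_coe]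
  rw [tsum_eq_single N fun n hn => by simp [Pi.single_eq_of_ne hn]]
  simp

section DualRetraction

variable {X : Type*} [NormedAddCommGroup X] [NormedSpace ℝ X] {Z : Submodule ℝ X}

noncomputable def embedCLM (T : 𝓨 ≃L[ℝ] Z) (N : ℕ) : C(ℕ → Bool, ℝ) →L[ℝ] X :=
  Z.subtypeL ∘L (T : 𝓨 →L[ℝ] Z) ∘L lp.singleContinuousLinearMap ℝ _ 1 N ∘L
    ContinuousMap.sampleCLM (cantorPoint N)

theorem norm_embedCLM_le (T : 𝓨 ≃L[ℝ] Z) (N : ℕ) : ‖embedCLM T N‖ ≤ ‖(T : 𝓨 →L[ℝ] Z)‖ := by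
  have hsingle : ‖lp.singleContinuousLinearMap ℝ (fun n : ℕ => Fin (2 ^ n) → ℝ) 1 N‖ ≤ 1 :=
    ContinuousLinearMap.opNorm_le_bound _ zero_le_one fun v => by
      simp [lp.norm_single]
  unfold embedCLM
  grw [ContinuousLinearMap.opNorm_comp_le, ContinuousLinearMap.opNorm_comp_le,
    ContinuousLinearMap.opNorm_comp_le, Submodule.norm_subtypeL_le, hsingle,
    ContinuousMap.norm_sampleCLM_le]
  simp

theorem exists_lift_embedCLM (T : 𝓨 ≃L[ℝ] Z) (M : ℕ) :
    ∃ b : X →L[ℝ] C(ℕ → Bool, ℝ), ‖b‖ ≤ ‖(T.symm : Z →L[ℝ] 𝓨)‖ ∧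
      ∀ N ≤ M, ∀ f, b (embedCLM T N f) = ContinuousMap.pullbackCLM (cantorCode N)
        (continuous_cantorCode N) (ContinuousMap.sampleCLM (cantorPoint N) f) := by
  let g : Z →L[ℝ] (Fin (2 ^ M) → ℝ) := ContinuousLinearMap.pi fun s =>
    branchEval (fun n => cantorCode n (cantorPoint M s)) ∘L (T.symm : Z →L[ℝ] 𝓨)
  have hg : ‖g‖ ≤ ‖(T.symm : Z →L[ℝ] 𝓨)‖ :=
    ContinuousLinearMap.norm_pi_le_of_le
      (fun s => (ContinuousLinearMap.opNorm_comp_le _ _).trans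
        (mul_le_of_le_one_left (norm_nonneg _) (norm_branchEval_le _)))
      (ContinuousLinearMap.opNorm_nonneg _)
  obtain ⟨G, hGg, hGn⟩ := exists_extension_pi_norm_le Z g
  refine ⟨ContinuousMap.pullbackCLM (cantorCode M) (continuous_cantorCode M) ∘L G, ?_,
    fun N hNM f => ?_⟩
  · grw [ContinuousLinearMap.opNorm_comp_le, ContinuousMap.norm_pullbackCLM_le, hGn, hg, one_mul]
  ext t
  have := hGg (T (lp.single 1 N (ContinuousMap.sampleCLM (cantorPoint N) f)))
  simp [embedCLM, this, g, ContinuousMap.pullbackCLM_apply, branchEval_single,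
    ContinuousMap.sampleCLM_apply, cantorPoint_cantorCode, cantorTrunc_cantorTrunc hNM]

theorem betaQ_dual_le (T : 𝓨 ≃L[ℝ] Z) :
    betaQ (StrongDual ℝ C(ℕ → Bool, ℝ)) (StrongDual ℝ X) ≤
      ENNReal.ofReal (‖(T : 𝓨 →L[ℝ] Z)‖ * ‖(T.symm : Z →L[ℝ] 𝓨)‖) := by
  choose b hb hba using exists_lift_embedCLM T
  let U : Ultrafilter ℕ := .of atTop
  have hU : (U : Filter ℕ) ≤ atTop := Ultrafilter.of_le atTop
  exact betaQ_le_of_comp_eq_id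
    (ultralimitDual_comp_eq_id U (norm_embedCLM_le T) hb _
      (fun N f => hU ((eventually_ge_atTop N).mono fun M hM => hba M N hM f))
      fun f => (tendsto_pullbackCLM_sampleCLM f).mono_left hU)
    (norm_ultralimitDual_le U _) (norm_ultralimitDual_le U _)

end DualRetraction

theorem stmt5_general (X : Type*) [NormedAddCommGroup X] [NormedSpace ℝ X] :
    betaQ (StrongDual ℝ C((ℕ → Bool), ℝ)) (StrongDual ℝ X)
      ≤ alphaQ (lp (fun n : ℕ => Fin (2 ^ n) → ℝ) 1) X := by
  exact le_iInf₂ fun Z _ => le_iInf betaQ_dual_le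

/-- For every real Banach space `X`,
`β_{C(Δ)*}(X*) ≤ α_{(⊕ₙ₌₀^∞ ℓ∞^{2ⁿ})_{ℓ₁}}(X)`, where `Δ = {0,1}^ℕ` is the Cantor set. -/
theorem stmt5 (X : Type*) [NormedAddCommGroup X] [NormedSpace ℝ X] [CompleteSpace X] :
    betaQ (StrongDual ℝ C((ℕ → Bool), ℝ)) (StrongDual ℝ X)
      ≤ alphaQ (lp (fun n : ℕ => Fin (2 ^ n) → ℝ) 1) X :=
  stmt5_general X
end

section
/- Let W be a finite-dimensional real Banach space, let S : W → C(Δ) be a bounded linear operator, and let ε > 0. Then there exists a bounded linear operator Ŝ : W → Z with ‖Ŝ‖ ≤ (1+ε)‖S‖ and ‖S − T∘Ŝ‖ ≤ ε. -/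
/-!
Since `W` is finite-dimensional, `a ↦ (evaluation at a) ∘ S` is a continuous map from the compact space `Δ`
into `W →L[ℝ] ℝ`, hence uniformly continuous: there is a level `n` such that
`|S w b - S w a| ≤ ε ‖w‖` whenever `a` and `b` lie in the same cylinder `Δ_{n,i}`.
Let `Ŝ w` sample `S w` at one point of each `Δ_{n,i}` and put the samples into the `n`-th
summand `ℓ∞^{2ⁿ}` of `Z`; then `‖Ŝ‖ ≤ ‖S‖`, and `T (Ŝ w)` is the step function taking the
sampled value on each `Δ_{n,i}`, which is within `ε ‖w‖` of `S w`.
-/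

open MeasureTheory NormedSpace
open scoped ENNReal

/-- The indicator function `g_{n,i} ∈ C(Δ)` of the clopen cylinder
`Δ_{n,i} = {a ∈ {0,1}^ℕ : the first n coordinates of a are the binary digits of i}`. -/
noncomputable def cylinderIndicator (n i : ℕ) : C((ℕ → Bool), ℝ) :=
  ContinuousMap.comp
    ⟨fun b : Fin n → Bool => if ∀ k : Fin n, b k = i.testBit k then (1 : ℝ) else 0,
      continuous_of_discreteTopology⟩
    ⟨fun a k => a (k : ℕ), by continuity⟩

/-- The unit vector `e_{n,i}` of `Z = (⊕ₙ₌₀^∞ ℓ∞^{2ⁿ})_{ℓ₁}` (for `0 ≤ i < 2ⁿ`). -/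
noncomputable def unitVec (n i : ℕ) (h : i < 2 ^ n) : lp (fun n : ℕ => Fin (2 ^ n) → ℝ) 1 :=
  lp.single 1 n (Pi.single (⟨i, h⟩ : Fin (2 ^ n)) 1)

open Filter

theorem UniformContinuous.exists_forall_mem_cylinder_dist_lt {β M : Type*} [UniformSpace β]
    [DiscreteUniformity β] [PseudoMetricSpace M] {f : (ℕ → β) → M} (hf : UniformContinuous f)
    {ε : ℝ} (hε : 0 < ε) : ∃ n, ∀ a, ∀ b ∈ PiNat.cylinder a n, dist (f b) (f a) < ε := by
  have hU : uniformity (ℕ → β) = ⨅ k, 𝓟 {p : (ℕ → β) × (ℕ → β) | p.1 k = p.2 k} := by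
    simp only [Pi.uniformity, DiscreteUniformity.eq_principal_setRelId, comap_principal]
    rfl
  have hf' := hf (Metric.dist_mem_uniformity hε)
  rw [hU] at hf'
  obtain ⟨I, hI, hIsub⟩ := (hasBasis_iInf_principal_finite _).mem_iff.1 hf'
  obtain ⟨n, hn⟩ := hI.bddAbove
  exact ⟨n + 1, fun a b hb => hIsub (a := (b, a)) <| Set.mem_iInter₂.2 fun k hk =>
    PiNat.mem_cylinder_iff.1 hb k (Nat.lt_succ_of_le (hn hk))⟩

theorem ContinuousLinearMap.exists_forall_mem_cylinder_norm_sub_le {𝕜 β W F : Type*}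
    [NontriviallyNormedField 𝕜] [CompleteSpace 𝕜] [UniformSpace β] [DiscreteUniformity β]
    [CompactSpace β] [NormedAddCommGroup W] [NormedSpace 𝕜 W] [FiniteDimensional 𝕜 W]
    [NormedAddCommGroup F] [NormedSpace 𝕜 F] (S : W →L[𝕜] C(ℕ → β, F)) {ε : ℝ} (hε : 0 < ε) :
    ∃ n, ∀ a, ∀ b ∈ PiNat.cylinder a n, ∀ w, ‖S w b - S w a‖ ≤ ε * ‖w‖ := by
  set Φ : (ℕ → β) → W →L[𝕜] F := fun a => (ContinuousMap.evalCLM 𝕜 a).comp S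
  have hΦ : Continuous Φ := continuous_clm_apply.2 fun w => (S w).continuous
  obtain ⟨n, hn⟩ :=
    (CompactSpace.uniformContinuous_of_continuous hΦ).exists_forall_mem_cylinder_dist_lt hε
  refine ⟨n, fun a b hb w => ?_⟩
  calc ‖S w b - S w a‖ = ‖(Φ b - Φ a) w‖ := rfl
    _ ≤ ‖Φ b - Φ a‖ * ‖w‖ := (Φ b - Φ a).le_opNorm w
    _ ≤ ε * ‖w‖ := by
      gcongr
      exact (dist_eq_norm (Φ b) (Φ a) ▸ hn a b hb).le

theorem ContinuousMap.norm_evalCLM_le {𝕜 X E : Type*} [NontriviallyNormedField 𝕜]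
    [TopologicalSpace X] [CompactSpace X] [NormedAddCommGroup E] [NormedSpace 𝕜 E] (x : X) :
    ‖ContinuousMap.evalCLM (M := E) 𝕜 x‖ ≤ 1 :=
  ContinuousLinearMap.opNorm_le_bound _ zero_le_one fun f => by
    simpa using f.norm_coe_le_norm x

noncomputable def lp.singleCLM {𝕜 α : Type*} (E : α → Type*) [NontriviallyNormedField 𝕜]
    [∀ i, NormedAddCommGroup (E i)] [∀ i, NormedSpace 𝕜 (E i)] [DecidableEq α] (p : ℝ≥0∞)
    [Fact (1 ≤ p)] (i : α) : E i →L[𝕜] lp E p :=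
  (lp.lsingle p i).mkContinuous 1 fun x => by
    rw [one_mul]
    exact (lp.norm_single (zero_lt_one.trans_le Fact.out) i x).le

theorem lp.norm_singleCLM_le {𝕜 α : Type*} (E : α → Type*) [NontriviallyNormedField 𝕜]
    [∀ i, NormedAddCommGroup (E i)] [∀ i, NormedSpace 𝕜 (E i)] [DecidableEq α] (p : ℝ≥0∞)
    [Fact (1 ≤ p)] (i : α) : ‖lp.singleCLM (𝕜 := 𝕜) E p i‖ ≤ 1 :=
  LinearMap.mkContinuous_norm_le _ zero_le_one _

theorem Nat.bijective_testBit_fin (n : ℕ) :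
    Function.Bijective fun (i : Fin (2 ^ n)) (k : Fin n) => (i : ℕ).testBit k := by
  refine (Fintype.bijective_iff_injective_and_card _).2 ⟨fun i j hij => ?_, by simp⟩
  refine Fin.ext (Nat.eq_of_testBit_eq fun k => ?_)
  by_cases hk : k < n
  · exact congrFun hij ⟨k, hk⟩
  · have h2 : 2 ^ n ≤ 2 ^ k := Nat.pow_le_pow_right two_pos (not_lt.1 hk)
    rw [Nat.testBit_eq_false_of_lt (i.2.trans_le h2), Nat.testBit_eq_false_of_lt (j.2.trans_le h2)]

theorem mem_cylinder_testBit_iff {n : ℕ} {a : ℕ → Bool} {i : ℕ} :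
    a ∈ PiNat.cylinder i.testBit n ↔ ∀ k : Fin n, a k = i.testBit k := by
  simp [PiNat.mem_cylinder_iff, Fin.forall_iff]

theorem existsUnique_mem_cylinder_testBit (n : ℕ) (a : ℕ → Bool) :
    ∃! i : Fin (2 ^ n), a ∈ PiNat.cylinder (i : ℕ).testBit n := by
  simp only [mem_cylinder_testBit_iff, ← funext_iff, eq_comm (a := fun k : Fin n => a k)]
  exact (Nat.bijective_testBit_fin n).existsUnique fun k => a k

theorem cylinderIndicator_apply (n i : ℕ) (a : ℕ → Bool) :
    cylinderIndicator n i a = (PiNat.cylinder i.testBit n).indicator 1 a := by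
  classical
  simp only [Set.indicator_apply, mem_cylinder_testBit_iff, Pi.one_apply]
  rfl

theorem sum_smul_cylinderIndicator_apply {n : ℕ} (v : Fin (2 ^ n) → ℝ) {a : ℕ → Bool}
    {i : Fin (2 ^ n)} (ha : a ∈ PiNat.cylinder (i : ℕ).testBit n) :
    (∑ j, v j • cylinderIndicator n j) a = v i := by
  rw [ContinuousMap.coe_sum, Finset.sum_apply, Fintype.sum_eq_single i fun j hj => ?_]
  · simp [cylinderIndicator_apply, ha]
  · have hja : a ∉ PiNat.cylinder (j : ℕ).testBit n := fun hja =>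
      hj ((existsUnique_mem_cylinder_testBit n a).unique hja ha)
    simp [cylinderIndicator_apply, hja]

theorem apply_lp_single_eq_sum (T : lp (fun n : ℕ => Fin (2 ^ n) → ℝ) 1 →L[ℝ] C((ℕ → Bool), ℝ))
    (hT : ∀ (n i : ℕ) (h : i < 2 ^ n), T (unitVec n i h) = cylinderIndicator n i)
    (n : ℕ) (v : Fin (2 ^ n) → ℝ) :
    T (lp.single 1 n v) = ∑ i, v i • cylinderIndicator n i := by
  have hv : v = ∑ i, v i • Pi.single i 1 := by
    ext j
    simp [Pi.single_apply]
  have hunit : ∀ i : Fin (2 ^ n), lp.lsingle (𝕜 := ℝ) 1 n (Pi.single i 1) = unitVec n i i.2 :=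
    fun i => rfl
  change T (lp.lsingle (𝕜 := ℝ) 1 n v) = _
  conv_lhs => rw [hv]
  simp only [map_sum, map_smul, hunit, hT]

/-- Let `T : Z → C(Δ)` be the bounded linear operator determined by
`T e_{n,i} = g_{n,i}`. If `W` is a finite-dimensional real Banach space,
`S : W → C(Δ)` a bounded linear operator and `ε > 0`, then there is a bounded linear
operator `Ŝ : W → Z` with `‖Ŝ‖ ≤ (1+ε)‖S‖` and `‖S - T∘Ŝ‖ ≤ ε`. -/
theorem stmt14 (T : lp (fun n : ℕ => Fin (2 ^ n) → ℝ) 1 →L[ℝ] C((ℕ → Bool), ℝ))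
    (hT : ∀ (n i : ℕ) (h : i < 2 ^ n), T (unitVec n i h) = cylinderIndicator n i)
    (W : Type*) [NormedAddCommGroup W] [NormedSpace ℝ W] [FiniteDimensional ℝ W]
    (S : W →L[ℝ] C((ℕ → Bool), ℝ)) (ε : ℝ) (hε : 0 < ε) :
    ∃ Shat : W →L[ℝ] lp (fun n : ℕ => Fin (2 ^ n) → ℝ) 1,
      ‖Shat‖ ≤ (1 + ε) * ‖S‖ ∧ ‖S - T.comp Shat‖ ≤ ε := by
  obtain ⟨n, hn⟩ := S.exists_forall_mem_cylinder_norm_sub_le hε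
  let sample : C(ℕ → Bool, ℝ) →L[ℝ] (Fin (2 ^ n) → ℝ) :=
    ContinuousLinearMap.pi fun i => ContinuousMap.evalCLM ℝ (i : ℕ).testBit
  have hsample : ‖sample‖ ≤ 1 :=
    ContinuousLinearMap.norm_pi_le_of_le (fun i => ContinuousMap.norm_evalCLM_le _) zero_le_one
  refine ⟨(lp.singleCLM _ 1 n).comp (sample.comp S), ?_, ?_⟩
  · calc _ ≤ ‖lp.singleCLM (𝕜 := ℝ) _ 1 n‖ * (‖sample‖ * ‖S‖) :=
          (ContinuousLinearMap.opNorm_comp_le _ _).trans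
            (by gcongr; exact ContinuousLinearMap.opNorm_comp_le _ _)
      _ ≤ 1 * (1 * ‖S‖) := by gcongr; exact lp.norm_singleCLM_le _ _ _
      _ ≤ (1 + ε) * ‖S‖ := by nlinarith [norm_nonneg S]
  · refine ContinuousLinearMap.opNorm_le_bound _ hε.le fun w =>
      (ContinuousMap.norm_le _ (by positivity)).2 fun a => ?_
    obtain ⟨i, hi, -⟩ := existsUnique_mem_cylinder_testBit n a
    have hTS : T (lp.single 1 n (sample (S w))) a = S w (i : ℕ).testBit := by
      rw [apply_lp_single_eq_sum T hT, sum_smul_cylinderIndicator_apply _ hi]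
      rfl
    change ‖S w a - T (lp.single 1 n (sample (S w))) a‖ ≤ ε * ‖w‖
    rw [hTS]
    exact hn _ a hi w
end
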